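/- Let n ≥ 1 and η ∈ [0,1]. For every finitely supported function T : ℤ^n → ℝ^n there exists a finitely supported function T' : ℤ^n → ℝ^n such that T'_α = 0 whenever |α| ≥ 4√n, such that ∑_{α ∈ ℤ^n} α ⊗ T'_α = ∑_{α ∈ ℤ^n} α ⊗ T_α as n×n matrices, and such that ∑_{α ∈ ℤ^n} ψ̃(α, T'_α) ≤ ∑_{α ∈ ℤ^n} ψ̃(α, T_α). -/

import Mathlib

/-- The positively one-homogeneous extension
`ψ̃(b,T) = |T||b|² + η (b·T)²/|T|`, with `ψ̃(b,0) = 0`. -/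
noncomputable def psiT (n : ℕ) (η : ℝ) (b T : EuclideanSpace ℝ (Fin n)) : ℝ :=
  ‖T‖ * ‖b‖ ^ 2 + η * (inner ℝ b T : ℝ) ^ 2 / ‖T‖

/-- Embedding of integer vectors into `ℝⁿ` (with Euclidean structure). -/
noncomputable def intoE (n : ℕ) (b : Fin n → ℤ) : EuclideanSpace ℝ (Fin n) :=
  WithLp.toLp 2 (fun i => (b i : ℝ))

lemma psiT_zero (n : ℕ) (η : ℝ) (b : EuclideanSpace ℝ (Fin n)) : psiT n η b 0 = 0 := by
  simp [psiT]

lemma psiT_nonneg (n : ℕ) (η : ℝ) (hη : 0 ≤ η) (b v : EuclideanSpace ℝ (Fin n)) :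
    0 ≤ psiT n η b v :=
  add_nonneg (by positivity)
    (div_nonneg (mul_nonneg hη (sq_nonneg _)) (norm_nonneg _))

lemma psiT_ge (n : ℕ) (η : ℝ) (hη : 0 ≤ η) (b v : EuclideanSpace ℝ (Fin n)) :
    ‖v‖ * ‖b‖^2 ≤ psiT n η b v :=
  le_add_of_nonneg_right (div_nonneg (mul_nonneg hη (sq_nonneg _)) (norm_nonneg _))

lemma psiT_le (n : ℕ) (η : ℝ) (hη : 0 ≤ η) (b v : EuclideanSpace ℝ (Fin n)) :
    psiT n η b v ≤ (1 + η) * (‖b‖^2 * ‖v‖) := by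
  rcases eq_or_ne v 0 with rfl | hv
  · simp [psiT_zero]
  · have hv' : (0:ℝ) < ‖v‖ := norm_pos_iff.mpr hv
    have hcs : (inner ℝ b v : ℝ)^2 ≤ ‖b‖^2 * ‖v‖^2 := by
      nlinarith [abs_real_inner_le_norm b v, sq_abs (inner ℝ b v:ℝ), abs_nonneg (inner ℝ b v:ℝ),
        norm_nonneg b, norm_nonneg v, mul_nonneg (norm_nonneg b) (norm_nonneg v)]
    have h2 : η * (inner ℝ b v : ℝ)^2 / ‖v‖ ≤ η * ‖b‖^2 * ‖v‖ := by
      rw [div_le_iff₀ hv']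
      nlinarith [mul_le_mul_of_nonneg_left hcs hη]
    unfold psiT
    nlinarith

lemma core_ineq (B u v r r₁ r₂ η : ℝ) (hB : 0 ≤ B) (hη0 : 0 ≤ η) (hη1 : η ≤ 1)
    (hr : 0 < r) (h1 : 0 < r₁) (h2 : 0 < r₂) (hle : r ≤ r₁ + r₂)
    (hcs : (u + v)^2 ≤ B * r^2) :
    r * B + η * (u+v)^2 / r ≤ (r₁ * B + η * u^2 / r₁) + (r₂ * B + η * v^2 / r₂) := by
  have h12 : 0 < r₁ + r₂ := by linarith
  have hA : 0 ≤ r₁ + r₂ - r := by linarith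
  have hB1 : 0 ≤ B * r * (r₁ + r₂) - η * (u+v)^2 := by
    nlinarith [mul_le_of_le_one_left (sq_nonneg (u+v)) hη1, mul_nonneg (mul_nonneg hB hr.le) hA]
  have t1 : 0 ≤ (r₁ * r₂) * ((r₁ + r₂ - r) * (B * r * (r₁+r₂) - η * (u+v)^2)) :=
    mul_nonneg (mul_nonneg h1.le h2.le) (mul_nonneg hA hB1)
  have hEngel : 0 ≤ (u^2*r₂ + v^2*r₁) * (r₁+r₂) - (u+v)^2 * (r₁*r₂) := by
    nlinarith [sq_nonneg (u*r₂ - v*r₁)]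
  have t2 : 0 ≤ r * (η * ((u^2*r₂ + v^2*r₁)*(r₁+r₂) - (u+v)^2*(r₁*r₂))) :=
    mul_nonneg hr.le (mul_nonneg hη0 hEngel)
  set W : ℝ := B*(r₁+r₂-r)*(r*r₁*r₂) + (η*u^2*(r*r₂) + η*v^2*(r*r₁) - η*(u+v)^2*(r₁*r₂)) with hWdef
  have hid : W * (r₁+r₂) = (r₁ * r₂) * ((r₁ + r₂ - r) * (B * r * (r₁+r₂) - η * (u+v)^2))
      + r * (η * ((u^2*r₂ + v^2*r₁)*(r₁+r₂) - (u+v)^2*(r₁*r₂))) := by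
    rw [hWdef]; ring
  have hW : 0 ≤ W := by
    have h3 : 0 ≤ W * (r₁+r₂) := by rw [hid]; linarith
    exact nonneg_of_mul_nonneg_right (by linarith [h3] : 0 ≤ (r₁+r₂) * W) h12
  have e : (r₁ * B + η * u^2 / r₁) + (r₂ * B + η * v^2 / r₂) - (r * B + η * (u+v)^2 / r)
      = W / (r*r₁*r₂) := by
    rw [hWdef]; field_simp; ring
  have := div_nonneg hW (by positivity : (0:ℝ) ≤ r*r₁*r₂)
  linarith

lemma psiT_subadd (n : ℕ) (η : ℝ) (hη0 : 0 ≤ η) (hη1 : η ≤ 1)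
    (b S R : EuclideanSpace ℝ (Fin n)) :
    psiT n η b (S + R) ≤ psiT n η b S + psiT n η b R := by
  rcases eq_or_ne S 0 with rfl | hS
  · simp [psiT_zero]
  rcases eq_or_ne R 0 with rfl | hR
  · simp [psiT_zero]
  rcases eq_or_ne (S + R) 0 with h0 | h0
  · rw [h0, psiT_zero]
    exact add_nonneg (psiT_nonneg n η hη0 b S) (psiT_nonneg n η hη0 b R)
  have hr : (0:ℝ) < ‖S + R‖ := norm_pos_iff.mpr h0
  have h1 : (0:ℝ) < ‖S‖ := norm_pos_iff.mpr hS
  have h2 : (0:ℝ) < ‖R‖ := norm_pos_iff.mpr hR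
  have hle : ‖S + R‖ ≤ ‖S‖ + ‖R‖ := norm_add_le S R
  have hinner : (inner ℝ b (S + R) : ℝ) = (inner ℝ b S : ℝ) + (inner ℝ b R : ℝ) := inner_add_right b S R
  have hcs : ((inner ℝ b S : ℝ) + (inner ℝ b R : ℝ))^2 ≤ ‖b‖^2 * ‖S + R‖^2 := by
    rw [← hinner]
    nlinarith [abs_real_inner_le_norm b (S + R), sq_abs (inner ℝ b (S+R):ℝ),
      abs_nonneg (inner ℝ b (S+R):ℝ), mul_nonneg (norm_nonneg b) (norm_nonneg (S+R))]
  have := core_ineq (‖b‖^2) (inner ℝ b S : ℝ) (inner ℝ b R : ℝ) ‖S+R‖ ‖S‖ ‖R‖ η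
    (sq_nonneg _) hη0 hη1 hr h1 h2 hle hcs
  unfold psiT
  rw [hinner]
  linarith

def twoE (n : ℕ) (i : Fin n) : Fin n → ℤ := fun j => if j = i then 2 else 0

lemma twoE_injective (n : ℕ) : Function.Injective (twoE n) := by
  intro i i' h
  have := congrFun h i
  by_contra hne
  simp only [twoE, if_pos rfl, if_neg hne] at this
  exact two_ne_zero this

lemma intoE_twoE (n : ℕ) (i : Fin n) : intoE n (twoE n i) = EuclideanSpace.single i (2:ℝ) := by
  ext j
  simp [intoE, twoE, EuclideanSpace.single_apply]

lemma norm_intoE_twoE (n : ℕ) (i : Fin n) : ‖intoE n (twoE n i)‖ = 2 := by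
  rw [intoE_twoE, EuclideanSpace.norm_single]
  norm_num

lemma norm_intoE_sq (n : ℕ) (α : Fin n → ℤ) : ‖intoE n α‖^2 = ∑ i, ((α i : ℝ))^2 := by
  rw [EuclideanSpace.norm_eq]
  rw [Real.sq_sqrt (by positivity)]
  simp [intoE, Real.norm_eq_abs, sq_abs]

open Finset in
lemma l1_le_sqrt_l2 (n : ℕ) (α : Fin n → ℤ) :
    ∑ i, |(α i : ℝ)| ≤ Real.sqrt n * ‖intoE n α‖ := by
  have h := sq_sum_le_card_mul_sum_sq (s := (Finset.univ : Finset (Fin n)))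
    (f := fun i => |(α i : ℝ)|)
  simp only [Finset.card_univ, Fintype.card_fin, sq_abs] at h
  have h2 : (∑ i, |(α i : ℝ)|)^2 ≤ (Real.sqrt n * ‖intoE n α‖)^2 := by
    rw [mul_pow, Real.sq_sqrt (by positivity), norm_intoE_sq]
    exact h
  have hs : 0 ≤ ∑ i, |(α i : ℝ)| := Finset.sum_nonneg fun i _ => abs_nonneg _
  nlinarith [mul_nonneg (Real.sqrt_nonneg (n:ℝ)) (norm_nonneg (intoE n α))]

/-- Reduction to small multiplicities, general `n`: every finitely supported
`T : ℤⁿ → ℝⁿ` can be replaced by `T'` vanishing whenever `|α| ≥ 4√n`,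
with the same first moment `∑ α ⊗ T_α` and no larger energy. -/
theorem reduce_multiplicity_general_n (n : ℕ) (hn : 1 ≤ n)
    (η : ℝ) (hη : η ∈ Set.Icc (0 : ℝ) 1)
    (T : (Fin n → ℤ) → EuclideanSpace ℝ (Fin n))
    (hT : (Function.support T).Finite) :
    ∃ T' : (Fin n → ℤ) → EuclideanSpace ℝ (Fin n),
      (Function.support T').Finite ∧
      (∀ α : Fin n → ℤ, 4 * Real.sqrt n ≤ ‖intoE n α‖ → T' α = 0) ∧
      (∑ᶠ α : Fin n → ℤ, (Matrix.of fun i j => (α i : ℝ) * T' α j : Matrix (Fin n) (Fin n) ℝ)) =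
        (∑ᶠ α : Fin n → ℤ, (Matrix.of fun i j => (α i : ℝ) * T α j : Matrix (Fin n) (Fin n) ℝ)) ∧
      (∑ᶠ α : Fin n → ℤ, psiT n η (intoE n α) (T' α)) ≤
        (∑ᶠ α : Fin n → ℤ, psiT n η (intoE n α) (T α)) := by
  classical
  obtain ⟨hη0, hη1⟩ := hη
  set s : ℝ := Real.sqrt n with hs
  have hs1 : 1 ≤ s := by
    rw [hs, show (1:ℝ) = Real.sqrt 1 by simp]
    exact Real.sqrt_le_sqrt (by exact_mod_cast hn)
  set S0 : Finset (Fin n → ℤ) := hT.toFinset with hS0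
  have hmemS0 : ∀ α, α ∈ S0 ↔ T α ≠ 0 := fun α => hT.mem_toFinset
  set Tsm : (Fin n → ℤ) → EuclideanSpace ℝ (Fin n) :=
    fun α => if 4 * s ≤ ‖intoE n α‖ then 0 else T α with hTsm
  set Tbig : (Fin n → ℤ) → EuclideanSpace ℝ (Fin n) :=
    fun α => if 4 * s ≤ ‖intoE n α‖ then T α else 0 with hTbig
  have hsplit : ∀ α, Tsm α + Tbig α = T α := by
    intro α
    by_cases h : 4 * s ≤ ‖intoE n α‖ <;> simp [hTsm, hTbig, h]
  set M : Fin n → EuclideanSpace ℝ (Fin n) :=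
    fun i => ∑ α ∈ S0, ((α i : ℝ)) • Tbig α with hM
  set C : (Fin n → ℤ) → EuclideanSpace ℝ (Fin n) :=
    fun α => ∑ i, if α = twoE n i then (2⁻¹:ℝ) • M i else 0 with hC
  have hCtwoE : ∀ i, C (twoE n i) = (2⁻¹:ℝ) • M i := by
    intro i
    rw [hC]
    have : ∀ k : Fin n, (twoE n i = twoE n k) = (i = k) :=
      fun k => propext ⟨fun h => twoE_injective n h, fun h => by rw [h]⟩
    simp only [this]
    rw [Finset.sum_ite_eq Finset.univ i (fun k => (2⁻¹:ℝ) • M k)]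
    simp
  have hCother : ∀ α, (∀ i, α ≠ twoE n i) → C α = 0 := by
    intro α hα
    rw [hC]
    exact Finset.sum_eq_zero fun i _ => if_neg (hα i)
  set T' : (Fin n → ℤ) → EuclideanSpace ℝ (Fin n) := fun α => Tsm α + C α with hT'
  set S : Finset (Fin n → ℤ) := S0 ∪ Finset.image (twoE n) Finset.univ with hSdef
  have hT'zero : ∀ α, α ∉ S → T' α = 0 := by
    intro α hα
    rw [Finset.mem_union, not_or] at hα
    obtain ⟨h1, h2⟩ := hα
    have hTα : T α = 0 := by
      by_contra h
      exact h1 ((hmemS0 α).mpr h)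
    have hC0 : C α = 0 := by
      refine hCother α fun i hi => ?_
      exact h2 (Finset.mem_image.mpr ⟨i, Finset.mem_univ i, hi.symm⟩)
    rw [hT', hTsm]
    simp [hC0, hTα]
  have hT'supp : Function.support T' ⊆ ↑S := by
    intro α hα
    by_contra h
    exact hα (hT'zero α h)
  have hTsupp : Function.support T ⊆ ↑S := by
    intro α hα
    exact Finset.mem_coe.mpr (Finset.mem_union_left _ ((hmemS0 α).mpr hα))
  -- small-support property
  have hsmall : ∀ α : Fin n → ℤ, 4 * s ≤ ‖intoE n α‖ → T' α = 0 := by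
    intro α h
    have hC0 : C α = 0 := by
      refine hCother α fun i hi => ?_
      rw [hi] at h
      rw [norm_intoE_twoE] at h
      linarith
    rw [hT', hTsm]
    simp [hC0, if_pos h]
  refine ⟨T', Set.Finite.subset S.finite_toSet hT'supp, hsmall, ?_, ?_⟩
  · -- moment equality
    have hsupp1 : (Function.support fun α =>
        (Matrix.of fun i j => (α i : ℝ) * T' α j : Matrix (Fin n) (Fin n) ℝ)) ⊆ ↑S := by
      intro α hα
      apply hT'supp
      intro h0
      apply hα
      ext i j
      simp [h0]
    have hsupp2 : (Function.support fun α =>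
        (Matrix.of fun i j => (α i : ℝ) * T α j : Matrix (Fin n) (Fin n) ℝ)) ⊆ ↑S := by
      intro α hα
      apply hTsupp
      intro h0
      apply hα
      ext i j
      simp [h0]
    rw [finsum_eq_sum_of_support_subset _ hsupp1, finsum_eq_sum_of_support_subset _ hsupp2]
    ext i j
    simp only [Matrix.sum_apply, Matrix.of_apply]
    have happ : ∀ α, T' α j = Tsm α j + C α j := by
      intro α; rw [hT']; rfl
    have key : ∑ α ∈ S, (α i : ℝ) * C α j = M i j := by
      have hCapp : ∀ α, C α j = ∑ k, (if α = twoE n k then 2⁻¹ * M k j else 0) := by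
        intro α
        simp only [hC]
        rw [WithLp.ofLp_sum, Finset.sum_apply j Finset.univ (fun k => (if α = twoE n k then (2⁻¹:ℝ) • M k else 0).ofLp)]
        congr 1
        funext k
        by_cases h : α = twoE n k <;> simp [h]
      calc ∑ α ∈ S, (α i : ℝ) * C α j
          = ∑ α ∈ S, ∑ k, (if α = twoE n k then (α i : ℝ) * (2⁻¹ * M k j) else 0) := by
            refine Finset.sum_congr rfl fun α _ => ?_
            rw [hCapp α, Finset.mul_sum]
            refine Finset.sum_congr rfl fun k _ => ?_
            by_cases h : α = twoE n k <;> simp [h]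
        _ = ∑ k, ∑ α ∈ S, (if α = twoE n k then (α i : ℝ) * (2⁻¹ * M k j) else 0) :=
            Finset.sum_comm
        _ = ∑ k : Fin n, ((twoE n k i : ℝ)) * (2⁻¹ * M k j) := by
            refine Finset.sum_congr rfl fun k _ => ?_
            rw [Finset.sum_ite_eq' S (twoE n k) (fun α => (α i : ℝ) * (2⁻¹ * M k j))]
            rw [if_pos]
            exact Finset.mem_union_right _ (Finset.mem_image.mpr ⟨k, Finset.mem_univ k, rfl⟩)
        _ = M i j := by
            have : ∀ k : Fin n, ((twoE n k i : ℝ)) * (2⁻¹ * M k j)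
                = if i = k then 2 * (2⁻¹ * M k j) else 0 := by
              intro k
              by_cases h : i = k <;> simp [twoE, h]
            simp only [this]
            rw [Finset.sum_ite_eq Finset.univ i (fun k => 2 * (2⁻¹ * M k j))]
            simp
    have hMij : M i j = ∑ α ∈ S0, (α i : ℝ) * Tbig α j := by
      simp only [hM]
      rw [WithLp.ofLp_sum, Finset.sum_apply j S0 (fun α => (((α i : ℝ)) • Tbig α).ofLp)]
      refine Finset.sum_congr rfl fun α _ => ?_
      simp
    have hbig : ∑ α ∈ S0, (α i : ℝ) * Tbig α j = ∑ α ∈ S, (α i : ℝ) * Tbig α j := by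
      refine Finset.sum_subset Finset.subset_union_left fun α _ hα => ?_
      have hTα : T α = 0 := by
        by_contra h
        exact hα ((hmemS0 α).mpr h)
      rw [hTbig]
      by_cases h : 4 * s ≤ ‖intoE n α‖ <;> simp [h, hTα]
    calc ∑ α ∈ S, (α i : ℝ) * T' α j
        = ∑ α ∈ S, ((α i : ℝ) * Tsm α j + (α i : ℝ) * C α j) := by
          refine Finset.sum_congr rfl fun α _ => ?_
          rw [happ α, mul_add]
      _ = ∑ α ∈ S, (α i : ℝ) * Tsm α j + ∑ α ∈ S, (α i : ℝ) * C α j :=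
          Finset.sum_add_distrib
      _ = ∑ α ∈ S, (α i : ℝ) * Tsm α j + ∑ α ∈ S, (α i : ℝ) * Tbig α j := by
          rw [key, hMij, hbig]
      _ = ∑ α ∈ S, (α i : ℝ) * T α j := by
          rw [← Finset.sum_add_distrib]
          refine Finset.sum_congr rfl fun α _ => ?_
          rw [← mul_add]
          congr 1
          rw [← hsplit α]
          rfl
  · -- energy inequality
    have hsupp1 : (Function.support fun α => psiT n η (intoE n α) (T' α)) ⊆ ↑S := by
      intro α hα
      apply hT'supp
      intro h0
      apply hα
      show psiT n η (intoE n α) (T' α) = 0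
      rw [h0, psiT_zero]
    have hsupp2 : (Function.support fun α => psiT n η (intoE n α) (T α)) ⊆ ↑S := by
      intro α hα
      apply hTsupp
      intro h0
      apply hα
      show psiT n η (intoE n α) (T α) = 0
      rw [h0, psiT_zero]
    rw [finsum_eq_sum_of_support_subset _ hsupp1, finsum_eq_sum_of_support_subset _ hsupp2]
    have step1 : ∑ α ∈ S, psiT n η (intoE n α) (T' α)
        ≤ ∑ α ∈ S, psiT n η (intoE n α) (Tsm α) + ∑ α ∈ S, psiT n η (intoE n α) (C α) := by
      rw [← Finset.sum_add_distrib]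
      exact Finset.sum_le_sum fun α _ => psiT_subadd n η hη0 hη1 _ _ _
    have stepC : ∑ α ∈ S, psiT n η (intoE n α) (C α)
        ≤ ∑ α ∈ S0, psiT n η (intoE n α) (Tbig α) := by
      have e1 : ∑ α ∈ S, psiT n η (intoE n α) (C α)
          = ∑ k : Fin n, psiT n η (intoE n (twoE n k)) (C (twoE n k)) := by
        rw [← Finset.sum_image (f := fun α => psiT n η (intoE n α) (C α))
          (fun x _ y _ h => twoE_injective n h)]
        refine (Finset.sum_subset Finset.subset_union_right fun α _ hα => ?_).symm
        have : C α = 0 := by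
          refine hCother α fun i hi => ?_
          exact hα (Finset.mem_image.mpr ⟨i, Finset.mem_univ i, hi.symm⟩)
        rw [this, psiT_zero]
      rw [e1]
      have e2 : ∀ k : Fin n, psiT n η (intoE n (twoE n k)) (C (twoE n k)) ≤ 4 * ‖M k‖ := by
        intro k
        rw [hCtwoE k]
        calc psiT n η (intoE n (twoE n k)) ((2⁻¹:ℝ) • M k)
            ≤ (1 + η) * (‖intoE n (twoE n k)‖^2 * ‖(2⁻¹:ℝ) • M k‖) := psiT_le n η hη0 _ _
          _ = (1 + η) * (2 * ‖M k‖) := by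
              rw [norm_intoE_twoE, norm_smul, Real.norm_eq_abs,
                abs_of_pos (by norm_num : (0:ℝ) < 2⁻¹)]
              ring
          _ ≤ 4 * ‖M k‖ := by nlinarith [norm_nonneg (M k)]
      have e3 : ∀ k : Fin n, ‖M k‖ ≤ ∑ α ∈ S0, |(α k : ℝ)| * ‖Tbig α‖ := by
        intro k
        refine (norm_sum_le _ _).trans (le_of_eq (Finset.sum_congr rfl fun α _ => ?_))
        rw [norm_smul, Real.norm_eq_abs]
      have e4 : ∑ k : Fin n, ∑ α ∈ S0, |(α k : ℝ)| * ‖Tbig α‖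
          = ∑ α ∈ S0, (∑ k : Fin n, |(α k : ℝ)|) * ‖Tbig α‖ := by
        rw [Finset.sum_comm]
        exact Finset.sum_congr rfl fun α _ => (Finset.sum_mul _ _ _).symm
      have e5 : ∀ α ∈ S0, 4 * ((∑ k : Fin n, |(α k : ℝ)|) * ‖Tbig α‖)
          ≤ psiT n η (intoE n α) (Tbig α) := by
        intro α _
        rcases eq_or_ne (Tbig α) 0 with h0 | h0
        · rw [h0, psiT_zero, norm_zero]
          simp
        · have hcond : 4 * s ≤ ‖intoE n α‖ := by
            by_contra hc
            exact h0 (by rw [hTbig]; simp [hc])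
          have hl1 : ∑ k : Fin n, |(α k : ℝ)| ≤ s * ‖intoE n α‖ := l1_le_sqrt_l2 n α
          have hTb : (0:ℝ) ≤ ‖Tbig α‖ := norm_nonneg _
          have hge : ‖Tbig α‖ * ‖intoE n α‖^2 ≤ psiT n η (intoE n α) (Tbig α) :=
            psiT_ge n η hη0 _ _
          have hn1 : (0:ℝ) ≤ ‖intoE n α‖ := norm_nonneg _
          nlinarith [mul_le_mul_of_nonneg_right hl1 hTb,
            mul_le_mul_of_nonneg_right hcond (mul_nonneg hn1 hTb)]
      calc ∑ k : Fin n, psiT n η (intoE n (twoE n k)) (C (twoE n k))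
          ≤ ∑ k : Fin n, 4 * ‖M k‖ := Finset.sum_le_sum fun k _ => e2 k
        _ ≤ ∑ k : Fin n, 4 * ∑ α ∈ S0, |(α k : ℝ)| * ‖Tbig α‖ :=
            Finset.sum_le_sum fun k _ => by nlinarith [e3 k]
        _ = 4 * ∑ α ∈ S0, (∑ k : Fin n, |(α k : ℝ)|) * ‖Tbig α‖ := by
            rw [← Finset.mul_sum, e4]
        _ = ∑ α ∈ S0, 4 * ((∑ k : Fin n, |(α k : ℝ)|) * ‖Tbig α‖) := by
            rw [Finset.mul_sum]
        _ ≤ ∑ α ∈ S0, psiT n η (intoE n α) (Tbig α) := Finset.sum_le_sum e5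
    have stepBig : ∑ α ∈ S0, psiT n η (intoE n α) (Tbig α)
        ≤ ∑ α ∈ S, psiT n η (intoE n α) (Tbig α) :=
      Finset.sum_le_sum_of_subset_of_nonneg Finset.subset_union_left
        fun α _ _ => psiT_nonneg n η hη0 _ _
    have stepT : ∑ α ∈ S, psiT n η (intoE n α) (Tsm α)
        + ∑ α ∈ S, psiT n η (intoE n α) (Tbig α)
        = ∑ α ∈ S, psiT n η (intoE n α) (T α) := by
      rw [← Finset.sum_add_distrib]
      refine Finset.sum_congr rfl fun α _ => ?_
      by_cases h : 4 * s ≤ ‖intoE n α‖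
      · rw [hTsm, hTbig]
        simp only [if_pos h]
        rw [psiT_zero, zero_add]
      · rw [hTsm, hTbig]
        simp only [if_neg h]
        rw [psiT_zero, add_zero]
    linarith
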